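/- arXiv:0707.1117 — 3 statements merged into one kernel-verified Lean document; each statement's English description precedes it below -/
import Mathlib

section
/- Let V be a normed vector space and (f_n)_{n≥1} a sequence in V. Then (f_n) is a Cauchy sequence if and only if for every ε > 0 and every function F: ℕ → ℕ there exists M ≥ 1 such that ‖f_N - f_{N'}‖ ≤ ε for all N, N' with M ≤ N ≤ F(M) and M ≤ N' ≤ F(M). -/
section PseudoMetric

variable {α : Type*} [PseudoMetricSpace α] {u : ℕ → α}

theorem CauchySeq.metastable (hu : CauchySeq u) {ε : ℝ} (hε : 0 < ε) (F : ℕ → ℕ) :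
    ∃ M, 1 ≤ M ∧ ∀ N N', M ≤ N → N ≤ F M → M ≤ N' → N' ≤ F M → dist (u N) (u N') ≤ ε := by
  obtain ⟨M, hM⟩ := Metric.cauchySeq_iff.mp hu ε hε
  exact ⟨max M 1, le_max_right _ _, fun N N' hN _ hN' _ =>
    (hM N (le_of_max_le_left hN) N' (le_of_max_le_left hN')).le⟩

theorem cauchySeq_of_metastable
    (h : ∀ ε > 0, ∀ F : ℕ → ℕ, ∃ M,
      ∀ N N', M ≤ N → N ≤ F M → M ≤ N' → N' ≤ F M → dist (u N) (u N') ≤ ε) :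
    CauchySeq u := by
  rw [Metric.cauchySeq_iff]
  by_contra! hu
  obtain ⟨ε, hε, hu⟩ := hu
  choose m hm n hn hfar using hu
  -- `F` sends `M` past a pair of indices beyond `M` at distance at least `ε`.
  obtain ⟨M, hM⟩ := h (ε / 2) (half_pos hε) fun M => max (m M) (n M)
  have hnear := hM (m M) (n M) (hm M) (le_max_left _ _) (hn M) (le_max_right _ _)
  linarith [hfar M]

end PseudoMetric

theorem cauchy_iff_metastable {V : Type*} [NormedAddCommGroup V] (f : ℕ → V) :
    CauchySeq f ↔
      ∀ ε > (0 : ℝ), ∀ F : ℕ → ℕ, ∃ M : ℕ, 1 ≤ M ∧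
        ∀ N N' : ℕ, M ≤ N → N ≤ F M → M ≤ N' → N' ≤ F M → ‖f N - f N'‖ ≤ ε := by
  simp only [← dist_eq_norm]
  refine ⟨fun hf ε hε F => hf.metastable hε F, fun h => cauchySeq_of_metastable fun ε hε F => ?_⟩
  obtain ⟨M, -, hM⟩ := h ε hε F
  exact ⟨M, hM⟩
end

section
/- Let P ≥ 1, M ≥ 1, ε > 0, and let g: ZMod P → [-1,1]. Suppose ‖S_N g‖_{L²(ZMod P)} ≥ ε for some integer N ≥ 10M/ε². Then there exists a function b: ZMod P → [-1,1] such that, setting φ(v) := (1/M) ∑_{m=0}^{M-1} b(v + m), one has |⟨g, φ⟩_{L²(ZMod P)}| ≥ ε²/2. -/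
noncomputable def Sav (P N : ℕ) (g : ZMod P → ℝ) (v : ZMod P) : ℝ :=
  (∑ n ∈ Finset.range N, g (v + (n : ZMod P))) / N

lemma sum_shift_zmod {P : ℕ} [NeZero P] (f : ZMod P → ℝ) (c : ZMod P) :
    ∑ v : ZMod P, f (v + c) = ∑ v : ZMod P, f v :=
  Fintype.sum_equiv (Equiv.addRight c) _ _ (fun _ => rfl)

lemma window_diff {P : ℕ} (g : ZMod P → ℝ) (hg : ∀ v, |g v| ≤ 1)
    (N m : ℕ) (w : ZMod P) :
    |(∑ n ∈ Finset.range N, g (w + (m : ZMod P) + (n : ZMod P))) -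
      ∑ n ∈ Finset.range N, g (w + (n : ZMod P))| ≤ 2 * m := by
  have h1 : ∑ n ∈ Finset.range N, g (w + (m : ZMod P) + (n : ZMod P))
      = ∑ n ∈ Finset.Ico m (m + N), g (w + (n : ZMod P)) := by
    rw [Finset.sum_Ico_eq_sum_range]
    simp only [Nat.add_sub_cancel_left]
    refine Finset.sum_congr rfl fun n _ => ?_
    congr 1
    push_cast
    ring
  have h2 := Finset.sum_Ico_consecutive (fun n : ℕ => g (w + (n : ZMod P)))
      (Nat.zero_le m) (Nat.le_add_right m N)
  have h3 := Finset.sum_Ico_consecutive (fun n : ℕ => g (w + (n : ZMod P)))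
      (Nat.zero_le N) (Nat.le_add_left N m)
  have key : (∑ n ∈ Finset.range N, g (w + (m : ZMod P) + (n : ZMod P))) -
      ∑ n ∈ Finset.range N, g (w + (n : ZMod P))
      = (∑ n ∈ Finset.Ico N (m + N), g (w + (n : ZMod P))) -
        ∑ n ∈ Finset.range m, g (w + (n : ZMod P)) := by
    rw [h1]
    simp only [Finset.range_eq_Ico]
    linarith [h2, h3]
  rw [key]
  have hb : ∀ (s : Finset ℕ), |∑ n ∈ s, g (w + (n : ZMod P))| ≤ s.card := by
    intro s
    calc |∑ n ∈ s, g (w + (n : ZMod P))| ≤ ∑ n ∈ s, |g (w + (n : ZMod P))| :=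
          Finset.abs_sum_le_sum_abs _ _
      _ ≤ ∑ n ∈ s, 1 := Finset.sum_le_sum fun n _ => hg _
      _ = s.card := by simp
  have hb1 := hb (Finset.Ico N (m + N))
  have hb2 := hb (Finset.range m)
  simp [Nat.card_Ico] at hb1 hb2
  have := abs_sub (∑ n ∈ Finset.Ico N (m + N), g (w + (n : ZMod P)))
      (∑ n ∈ Finset.range m, g (w + (n : ZMod P)))
  calc |(∑ n ∈ Finset.Ico N (m + N), g (w + (n : ZMod P))) -
        ∑ n ∈ Finset.range m, g (w + (n : ZMod P))|
      ≤ |∑ n ∈ Finset.Ico N (m + N), g (w + (n : ZMod P))| +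
        |∑ n ∈ Finset.range m, g (w + (n : ZMod P))| := abs_sub _ _
    _ ≤ 2 * m := by
        have : ((m + N - N : ℕ) : ℝ) = m := by simp
        push_cast at hb1 hb2 ⊢
        linarith

lemma sav_abs_le {P N : ℕ} (g : ZMod P → ℝ) (hg : ∀ v, |g v| ≤ 1) (v : ZMod P) :
    |Sav P N g v| ≤ 1 := by
  unfold Sav
  rcases Nat.eq_zero_or_pos N with h | h
  · simp [h]
  · rw [abs_div, abs_of_nonneg (by positivity : (0:ℝ) ≤ (N:ℝ)),
      div_le_one (by exact_mod_cast h)]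
    calc |∑ n ∈ Finset.range N, g (v + (n : ZMod P))|
        ≤ ∑ n ∈ Finset.range N, |g (v + (n : ZMod P))| := Finset.abs_sum_le_sum_abs _ _
      _ ≤ ∑ n ∈ Finset.range N, 1 := Finset.sum_le_sum fun n _ => hg _
      _ = N := by simp

lemma sav_shift {P N : ℕ} (g : ZMod P → ℝ) (hg : ∀ v, |g v| ≤ 1) (hN : 0 < N)
    (m : ℕ) (w : ZMod P) :
    |Sav P N g (w + (m : ZMod P)) - Sav P N g w| ≤ 2 * m / N := by
  unfold Sav
  rw [div_sub_div_same, abs_div, abs_of_nonneg (by positivity : (0:ℝ) ≤ (N:ℝ)),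
    div_le_div_iff_of_pos_right (by exact_mod_cast hN)]
  exact window_diff g hg N m w

/-- Lack of uniformity implies correlation with a basic anti-uniform function. -/
theorem lack_of_uniformity_implies_correlation (P M N : ℕ) [NeZero P]
    (hP : 1 ≤ P) (hM : 1 ≤ M) (ε : ℝ) (hε : 0 < ε)
    (g : ZMod P → ℝ) (hg : ∀ v, |g v| ≤ 1)
    (hN : 10 * (M : ℝ) / ε ^ 2 ≤ N)
    (hnorm : ε ≤ Real.sqrt ((1 / (P : ℝ)) * ∑ v : ZMod P, (Sav P N g v) ^ 2)) :
    ∃ b : ZMod P → ℝ, (∀ x, |b x| ≤ 1) ∧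
      ε ^ 2 / 2 ≤
        |(1 / (P : ℝ)) * ∑ v : ZMod P,
          g v * ((∑ m ∈ Finset.range M, b (v + (m : ZMod P))) / M)| := by
  have hMR : (0:ℝ) < M := by exact_mod_cast hM
  have hNpos : 0 < N := by
    by_contra h
    push_neg at h
    have : N = 0 := Nat.le_zero.mp h
    rw [this] at hN
    have : (0:ℝ) < 10 * M / ε ^ 2 := by positivity
    simp at hN
    linarith
  have hNR : (0:ℝ) < N := by exact_mod_cast hNpos
  have hPR : (0:ℝ) < P := by exact_mod_cast hP
  set A := (1 / (P : ℝ)) * ∑ v : ZMod P, (Sav P N g v) ^ 2 with hAdef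
  have hA0 : 0 ≤ A := by positivity
  have hA : ε ^ 2 ≤ A := by
    have := Real.sq_sqrt hA0
    nlinarith [Real.sqrt_nonneg A]
  -- the dual function
  set b : ZMod P → ℝ := fun v => (∑ n ∈ Finset.range N, Sav P N g (v - (n : ZMod P))) / N
    with hbdef
  have hb : ∀ x, |b x| ≤ 1 := by
    intro x
    rw [hbdef]
    rw [abs_div, abs_of_nonneg hNR.le, div_le_one hNR]
    calc |∑ n ∈ Finset.range N, Sav P N g (x - (n : ZMod P))|
        ≤ ∑ n ∈ Finset.range N, |Sav P N g (x - (n : ZMod P))| :=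
          Finset.abs_sum_le_sum_abs _ _
      _ ≤ ∑ n ∈ Finset.range N, 1 := Finset.sum_le_sum fun n _ => sav_abs_le g hg _
      _ = N := by simp
  have hbshift : ∀ (m : ℕ) (v : ZMod P), |b (v + (m : ZMod P)) - b v| ≤ 2 * m / N := by
    intro m v
    have heq : b (v + (m : ZMod P)) - b v
        = (∑ n ∈ Finset.range N,
            (Sav P N g ((v - (n : ZMod P)) + (m : ZMod P)) - Sav P N g (v - (n : ZMod P)))) / N := by
      rw [hbdef]
      simp only
      rw [div_sub_div_same, ← Finset.sum_sub_distrib]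
      congr 1
      refine Finset.sum_congr rfl fun n _ => ?_
      congr 2
      ring
    rw [heq, abs_div, abs_of_nonneg hNR.le, div_le_div_iff_of_pos_right hNR]
    calc |∑ n ∈ Finset.range N,
            (Sav P N g ((v - (n : ZMod P)) + (m : ZMod P)) - Sav P N g (v - (n : ZMod P)))|
        ≤ ∑ n ∈ Finset.range N,
            |Sav P N g ((v - (n : ZMod P)) + (m : ZMod P)) - Sav P N g (v - (n : ZMod P))| :=
          Finset.abs_sum_le_sum_abs _ _
      _ ≤ ∑ _n ∈ Finset.range N, 2 * (m:ℝ) / N :=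
          Finset.sum_le_sum fun n _ => sav_shift g hg hNpos m _
      _ = N * (2 * (m:ℝ) / N) := by rw [Finset.sum_const, Finset.card_range]; push_cast; ring
      _ = 2 * m := by field_simp
  -- correlation of g with b equals A
  have hgb : (1 / (P : ℝ)) * ∑ v : ZMod P, g v * b v = A := by
    rw [hAdef]
    congr 1
    have s1 : ∀ v : ZMod P, g v * b v
        = (∑ n ∈ Finset.range N, g v * Sav P N g (v - (n : ZMod P))) / N := by
      intro v
      rw [hbdef]
      simp only
      rw [← mul_div_assoc, Finset.mul_sum]
    calc ∑ v : ZMod P, g v * b v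
        = (∑ v : ZMod P, ∑ n ∈ Finset.range N, g v * Sav P N g (v - (n : ZMod P))) / N := by
          simp only [s1]
          rw [← Finset.sum_div]
      _ = (∑ n ∈ Finset.range N, ∑ v : ZMod P, g v * Sav P N g (v - (n : ZMod P))) / N := by
          rw [Finset.sum_comm]
      _ = (∑ n ∈ Finset.range N, ∑ v : ZMod P, g (v + (n : ZMod P)) * Sav P N g v) / N := by
          congr 1
          refine Finset.sum_congr rfl fun n _ => ?_
          rw [← sum_shift_zmod (fun v => g v * Sav P N g (v - (n : ZMod P))) (n : ZMod P)]
          refine Finset.sum_congr rfl fun v _ => ?_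
          simp only [add_sub_cancel_right]
      _ = (∑ v : ZMod P, Sav P N g v * ∑ n ∈ Finset.range N, g (v + (n : ZMod P))) / N := by
          rw [Finset.sum_comm]
          congr 1
          refine Finset.sum_congr rfl fun v _ => ?_
          rw [Finset.mul_sum]
          exact Finset.sum_congr rfl fun n _ => mul_comm _ _
      _ = ∑ v : ZMod P, (Sav P N g v) ^ 2 := by
          rw [Finset.sum_div]
          refine Finset.sum_congr rfl fun v _ => ?_
          rw [sq]
          unfold Sav
          rw [mul_div_assoc]
  -- each shifted correlation is large
  have hterm : ∀ m ∈ Finset.range M,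
      A - 2 * M / N ≤ (1 / (P : ℝ)) * ∑ v : ZMod P, g v * b (v + (m : ZMod P)) := by
    intro m hm
    have hmM : (m : ℝ) ≤ M := by
      exact_mod_cast (Finset.mem_range.mp hm).le
    have hsplit : (1 / (P : ℝ)) * ∑ v : ZMod P, g v * b (v + (m : ZMod P))
        = A + (1 / (P : ℝ)) * ∑ v : ZMod P, g v * (b (v + (m : ZMod P)) - b v) := by
      rw [← hgb, ← mul_add, ← Finset.sum_add_distrib]
      congr 1
      exact Finset.sum_congr rfl fun v _ => by ring
    rw [hsplit]
    have herr : |(1 / (P : ℝ)) * ∑ v : ZMod P, g v * (b (v + (m : ZMod P)) - b v)|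
        ≤ 2 * m / N := by
      rw [abs_mul, abs_of_nonneg (by positivity : (0:ℝ) ≤ 1 / (P:ℝ))]
      have : |∑ v : ZMod P, g v * (b (v + (m : ZMod P)) - b v)| ≤ P * (2 * m / N) := by
        calc |∑ v : ZMod P, g v * (b (v + (m : ZMod P)) - b v)|
            ≤ ∑ v : ZMod P, |g v * (b (v + (m : ZMod P)) - b v)| :=
              Finset.abs_sum_le_sum_abs _ _
          _ ≤ ∑ _v : ZMod P, 2 * (m:ℝ) / N := by
              refine Finset.sum_le_sum fun v _ => ?_
              rw [abs_mul]
              calc |g v| * |b (v + (m : ZMod P)) - b v| ≤ 1 * (2 * m / N) := by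
                    exact mul_le_mul (hg v) (hbshift m v) (abs_nonneg _) zero_le_one
                _ = 2 * (m:ℝ) / N := one_mul _
          _ = P * (2 * (m:ℝ) / N) := by
              rw [Finset.sum_const]
              simp [ZMod.card]
      calc 1 / (P:ℝ) * |∑ v : ZMod P, g v * (b (v + (m : ZMod P)) - b v)|
          ≤ 1 / (P:ℝ) * ((P:ℝ) * (2 * m / N)) := by
            exact mul_le_mul_of_nonneg_left this (by positivity)
        _ = 2 * m / N := by field_simp
    have h1 : -(2 * (m:ℝ) / N) ≤ (1 / (P : ℝ)) * ∑ v : ZMod P, g v * (b (v + (m : ZMod P)) - b v) :=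
      neg_le_of_abs_le herr
    have h2 : 2 * (m:ℝ) / N ≤ 2 * M / N := by gcongr
    linarith
  -- conclude
  refine ⟨b, hb, ?_⟩
  have hT : (1 / (P : ℝ)) * ∑ v : ZMod P,
        g v * ((∑ m ∈ Finset.range M, b (v + (m : ZMod P))) / M)
      = (∑ m ∈ Finset.range M,
          (1 / (P : ℝ)) * ∑ v : ZMod P, g v * b (v + (m : ZMod P))) / M := by
    have s1 : ∀ v : ZMod P, g v * ((∑ m ∈ Finset.range M, b (v + (m : ZMod P))) / M)
        = (∑ m ∈ Finset.range M, g v * b (v + (m : ZMod P))) / M := by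
      intro v
      rw [← mul_div_assoc, Finset.mul_sum]
    simp only [s1]
    rw [← Finset.sum_div, Finset.sum_comm, ← mul_div_assoc, Finset.mul_sum]
  have hTge : A - 2 * M / N ≤ (1 / (P : ℝ)) * ∑ v : ZMod P,
      g v * ((∑ m ∈ Finset.range M, b (v + (m : ZMod P))) / M) := by
    rw [hT]
    rw [le_div_iff₀ hMR]
    calc (A - 2 * M / N) * M = ∑ _m ∈ Finset.range M, (A - 2 * M / N) := by
          rw [Finset.sum_const, Finset.card_range]; ring
      _ ≤ ∑ m ∈ Finset.range M,
            (1 / (P : ℝ)) * ∑ v : ZMod P, g v * b (v + (m : ZMod P)) :=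
          Finset.sum_le_sum hterm
  have h2MN : 2 * (M:ℝ) / N ≤ ε ^ 2 / 5 := by
    rw [div_le_div_iff₀ hNR (by norm_num : (0:ℝ) < 5)]
    have := (div_le_iff₀ (by positivity : (0:ℝ) < ε ^ 2)).mp hN
    nlinarith
  have hε2 : (0:ℝ) < ε ^ 2 := by positivity
  have : ε ^ 2 / 2 ≤ (1 / (P : ℝ)) * ∑ v : ZMod P,
      g v * ((∑ m ∈ Finset.range M, b (v + (m : ZMod P))) / M) := by
    linarith
  exact this.trans (le_abs_self _)
end

section
/- Let P ≥ 1, l ≥ 1, and f₁, ..., f_l: (ZMod P)^l → ℝ. Define A_N(f₁,...,f_l)(a) := (1/N) ∑_{n=0}^{N-1} ∏_{i=1}^l f_i(a + n·e_i), where e_i are the standard generators of (ZMod P)^l. For each 1 ≤ i ≤ l define g_i: (ZMod P)^{l+1} → ℝ by g_i(v₁,...,v_{l+1}) := f_i(v₁,...,v_{i-1}, -∑_{j ≠ i, 1≤j≤l+1} v_j, v_{i+1},...,v_l). Then A_N(f₁,...,f_l)(v₁,...,v_l) = (1/N) ∑_{n=0}^{N-1} ∏_{i=1}^l g_i(v₁,...,v_l,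 -v₁-...-v_l-n). -/
open Finset

theorem Fin.sum_erase_castSucc_snoc {M : Type*} [AddCommGroup M] {l : ℕ} (v : Fin l → M) (x : M)
    (i : Fin l) :
    ∑ k ∈ univ.erase i.castSucc, (Fin.snoc v x : Fin (l + 1) → M) k =
      ∑ j, v j + x - v i := by
  rw [sum_erase_eq_sub (mem_univ _), Fin.sum_univ_castSucc]
  simp only [Fin.snoc_castSucc, Fin.snoc_last]

theorem solve_coord_snoc_neg_sum_sub {M : Type*} [AddCommGroup M] {l : ℕ} (v : Fin l → M)
    (t : M) (i : Fin l) :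
    (fun j : Fin l =>
      if j = i then
        -(∑ k ∈ univ.erase i.castSucc, (Fin.snoc v (-(∑ j, v j) - t) : Fin (l + 1) → M) k)
      else (Fin.snoc v (-(∑ j, v j) - t) : Fin (l + 1) → M) j.castSucc) =
      fun j => v j + if j = i then t else 0 := by
  funext j
  split_ifs with h
  · subst h
    rw [Fin.sum_erase_castSucc_snoc]
    abel
  · rw [Fin.snoc_castSucc, add_zero]

theorem average_as_diagonal_general (P l N : ℕ)
    (f : Fin l → (Fin l → ZMod P) → ℝ)
    (g : Fin l → (Fin (l + 1) → ZMod P) → ℝ)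
    (hg : ∀ (i : Fin l) (w : Fin (l + 1) → ZMod P),
      g i w = f i (fun j : Fin l =>
        if j = i then -(∑ k ∈ Finset.univ.erase (Fin.castSucc i), w k)
        else w (Fin.castSucc j))) :
    ∀ v : Fin l → ZMod P,
      (∑ n ∈ Finset.range N,
          ∏ i, f i (fun j => v j + if j = i then (n : ZMod P) else 0)) / N =
        (∑ n ∈ Finset.range N,
          ∏ i, g i (Fin.snoc v (-(∑ j, v j) - (n : ZMod P)))) / N := by
  intro v
  congr 1
  refine sum_congr rfl fun n _ => prod_congr rfl fun i _ => ?_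
  rw [hg, solve_coord_snoc_neg_sum_sub]

/-- The identity expressing the multiple average `A_N(f₁,...,f_l)` as a diagonally
averaged projection of the product of the lifted functions `g_i`. -/
theorem average_as_diagonal (P l N : ℕ) (hP : 1 ≤ P) (hl : 1 ≤ l) (hN : 1 ≤ N)
    (f : Fin l → (Fin l → ZMod P) → ℝ)
    (g : Fin l → (Fin (l + 1) → ZMod P) → ℝ)
    (hg : ∀ (i : Fin l) (w : Fin (l + 1) → ZMod P),
      g i w = f i (fun j : Fin l =>
        if j = i then -(∑ k ∈ Finset.univ.erase (Fin.castSucc i), w k)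
        else w (Fin.castSucc j))) :
    ∀ v : Fin l → ZMod P,
      (∑ n ∈ Finset.range N,
          ∏ i, f i (fun j => v j + if j = i then (n : ZMod P) else 0)) / N =
        (∑ n ∈ Finset.range N,
          ∏ i, g i (Fin.snoc v (-(∑ j, v j) - (n : ZMod P)))) / N :=
  average_as_diagonal_general P l N f g hg
end
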